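/- arXiv:2504.16602 — 2 statements merged into one kernel-verified Lean document; each statement's English description precedes it below -/
import Mathlib

section
/- In the category of bounded distributive lattices, a morphism f : X → Y is an extremal epimorphism if and only if the underlying map of f is surjective. -/
/-!
Every morphism factors through the inclusion of its image, a bounded sublattice of the codomain;
that inclusion is a monomorphism, so for an extremal epimorphism it is an isomorphism, i.e. the
morphism is surjective. Conversely, a monomorphism `g : Z ⟶ Y` is injective: its two projections
from the kernel pair `{(a, b) | g a = g b}`, again a bounded sublattice, are equalized by `g`, hence
equal. So if `f = h ≫ g` is surjective, `g` is bijective, and a bijective lattice homomorphism is an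
order isomorphism.
-/

open CategoryTheory

/-- A morphism `f` in a category is an extremal epimorphism if whenever `f = h ≫ g`
with `g` a monomorphism, then `g` is an isomorphism. -/
def IsExtremalEpi {C : Type*} [Category C] {X Y : C} (f : X ⟶ Y) : Prop :=
  ∀ ⦃Z : C⦄ (g : Z ⟶ Y) (h : X ⟶ Z), f = h ≫ g → Mono g → IsIso g

universe u

def LatticeHom.eqLocus {α β : Type*} [Lattice α] [Lattice β] (f g : LatticeHom α β) :
    Sublattice α where
  carrier := {a | f a = g a}
  supClosed' a ha b hb := by simp_all only [Set.mem_ofPred_eq, map_sup]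
  infClosed' a ha b hb := by simp_all only [Set.mem_ofPred_eq, map_inf]

namespace BddDistLat

section Sublattice

variable {X Y : BddDistLat.{u}} (L : Sublattice X) (hbot : ⊥ ∈ L) (htop : ⊤ ∈ L)

def ofSublattice : BddDistLat.{u} where
  toDistLat := .of L
  isBoundedOrder := Subtype.boundedOrder hbot htop

def ofSublatticeSubtype : ofSublattice L hbot htop ⟶ X :=
  ConcreteCategory.ofHom { L.subtype with map_top' := rfl, map_bot' := rfl }

instance : Mono (ofSublatticeSubtype L hbot htop) :=
  ConcreteCategory.mono_of_injective _ fun _ _ => Subtype.ext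

def codRestrict (f : Y ⟶ X) (hf : ∀ y, f y ∈ L) : Y ⟶ ofSublattice L hbot htop :=
  ConcreteCategory.ofHom
    { toFun y := ⟨f y, hf y⟩
      map_sup' a b := Subtype.ext (map_sup f.hom a b)
      map_inf' a b := Subtype.ext (map_inf f.hom a b)
      map_top' := Subtype.ext (map_top f.hom)
      map_bot' := Subtype.ext (map_bot f.hom) }

@[simp]
lemma codRestrict_comp_ofSublatticeSubtype (f : Y ⟶ X) (hf : ∀ y, f y ∈ L) :
    codRestrict L hbot htop f hf ≫ ofSublatticeSubtype L hbot htop = f := rfl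

end Sublattice

variable {X Y : BddDistLat.{u}}

def fst : of (X × Y) ⟶ X :=
  ConcreteCategory.ofHom { LatticeHom.fst with map_top' := rfl, map_bot' := rfl }

def snd : of (X × Y) ⟶ Y :=
  ConcreteCategory.ofHom { LatticeHom.snd with map_top' := rfl, map_bot' := rfl }

theorem injective_of_mono (g : X ⟶ Y) [Mono g] : Function.Injective g := by
  intro a b hab
  let K := LatticeHom.eqLocus (fst ≫ g).hom.toLatticeHom (snd ≫ g).hom.toLatticeHom
  have hbot : ⊥ ∈ K := (map_bot (fst ≫ g).hom).trans (map_bot (snd ≫ g).hom).symm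
  have htop : ⊤ ∈ K := (map_top (fst ≫ g).hom).trans (map_top (snd ≫ g).hom).symm
  have hK : ofSublatticeSubtype K hbot htop ≫ fst = ofSublatticeSubtype K hbot htop ≫ snd :=
    (cancel_mono g).1 (ConcreteCategory.hom_ext _ _ fun p => p.2)
  exact congr($hK (⟨(a, b), hab⟩ : K))

theorem isIso_of_bijective (g : X ⟶ Y) (hg : Function.Bijective g) : IsIso g :=
  (Iso.mk (OrderIso.ofSurjective (orderEmbeddingOfInjective g.hom hg.1) hg.2)).isIso_hom

end BddDistLat

open BddDistLat in
/-- In the category of bounded distributive lattices, a morphism is an extremal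
epimorphism if and only if its underlying map is surjective. -/
theorem bddDistLat_extremalEpi_iff_surjective {X Y : BddDistLat} (f : X ⟶ Y) :
    IsExtremalEpi f ↔ Function.Surjective (show BoundedLatticeHom X Y from f.hom) := by
  change _ ↔ Function.Surjective f
  constructor
  · intro hf
    let R := Sublattice.LatticeHom.range f.hom.toLatticeHom
    have hbot : ⊥ ∈ R := ⟨⊥, map_bot f.hom⟩
    have htop : ⊤ ∈ R := ⟨⊤, map_top f.hom⟩
    have := hf (ofSublatticeSubtype R hbot htop) (codRestrict R hbot htop f Set.mem_range_self)
      (codRestrict_comp_ofSublatticeSubtype ..).symm inferInstance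
    intro y
    obtain ⟨⟨_, x, rfl⟩, rfl⟩ :=
      (ConcreteCategory.bijective_of_isIso (ofSublatticeSubtype R hbot htop)).2 y
    exact ⟨x, rfl⟩
  · intro hf Z g h hfac _
    subst hfac
    exact isIso_of_bijective g ⟨injective_of_mono g, .of_comp hf⟩
end

section
/- Let C be a tensor-triangulated category with coproducts and let T be a class of dualizable objects of C that is closed under retracts and closed under tensoring with dualizable objects. Then Loc_⊗(T)^⊥ = { X ∈ C : T ⊗ X ≅ 0 for every T ∈ T }. In particular, Loc_⊗(T)^⊥ is a localising tensor ideal, so the localising tensor ideal generated by T is smashing. -/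
/-!
For `t` with dual `t'` there is a bijection `Hom(t' ⊗ A, X) ≃ Hom(A, t ⊗ X)`.

If `X ⊥ Loc_⊗(T)` and `t ∈ T`, then `t' ⊗ t ⊗ X ∈ Loc_⊗(T)`, so the identity of `t ⊗ X`
corresponds to a zero map and `t ⊗ X ≅ 0`.

Conversely, suppose `t ⊗ X ≅ 0` for all `t ∈ T`. The class `T` is closed under duals, so every
`t ∈ T` lies in `{s | Hom(Y ⊗ s, X) = 0 for all Y}`. This class is a localising tensor ideal;
quantifying over `Y` also absorbs shifts, because `(Y ⊗ s)[n] ≅ Y[n] ⊗ s`. Hence it contains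
`Loc_⊗(T)`, and `Y = 𝟙` gives `X ⊥ Loc_⊗(T)`.

Finally, `{X | t ⊗ X ≅ 0 for all t ∈ T}` is a localising tensor ideal, since each `t ⊗ -` is
exact and preserves coproducts.
-/

open CategoryTheory Limits Pretriangulated MonoidalCategory

universe v u

variable (C : Type u) [Category.{v} C] [HasZeroObject C] [Preadditive C]
  [HasShift C ℤ] [∀ n : ℤ, (CategoryTheory.shiftFunctor C n).Additive] [Pretriangulated C]
  [MonoidalCategory C] [SymmetricCategory C] [HasCoproducts.{v} C]

variable {C}

/-- A localising tensor ideal of a tensor-triangulated category with coproducts: a class of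
objects closed under isomorphisms, retracts, shifts, cones of morphisms between its objects,
small coproducts, and tensoring with arbitrary objects. -/
structure IsLocalisingTensorIdeal (S : Set C) : Prop where
  iso_closed : ∀ {X Y : C}, (X ≅ Y) → X ∈ S → Y ∈ S
  retract_closed : ∀ {X Y : C} (i : X ⟶ Y) (r : Y ⟶ X), i ≫ r = 𝟙 X → Y ∈ S → X ∈ S
  shift_closed : ∀ (n : ℤ) {X : C}, X ∈ S → (shiftFunctor C n).obj X ∈ S
  cone_closed : ∀ (T : Triangle C), (T ∈ distTriang C) → T.obj₁ ∈ S → T.obj₂ ∈ S → T.obj₃ ∈ S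
  coproduct_closed : ∀ {J : Type v} (f : J → C), (∀ j, f j ∈ S) → (∐ f) ∈ S
  tensor_closed : ∀ (Y : C) {X : C}, X ∈ S → Y ⊗ X ∈ S

/-- The right orthogonal `S^⊥` of a class of objects: all `X` with `Hom(s, X) = 0` for
every `s ∈ S`. -/
def rightPerp (S : Set C) : Set C := {X | ∀ ⦃Y : C⦄, Y ∈ S → ∀ f : Y ⟶ X, f = 0}

/-- `Loc_⊗(E)`, the smallest localising tensor ideal containing the class `E`. -/
def locTensorIdeal (E : Set C) : Set C := ⋂₀ {S : Set C | IsLocalisingTensorIdeal S ∧ E ⊆ S}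

/-- An object of a monoidal category is dualizable if it admits an exact pairing with some
object. -/
def Dualizable (X : C) : Prop := ∃ Y : C, Nonempty (ExactPairing X Y)

section Braided

variable {D : Type*} [Category D] [MonoidalCategory D] [BraidedCategory D]

lemma dualizable_of_exactPairing (t t' : D) [ExactPairing t t'] : Dualizable t' :=
  ⟨t, ⟨BraidedCategory.exactPairing_swap t t'⟩⟩

lemma mem_of_exactPairing {T : Set D}
    (hretract : ∀ {X Y : D} (i : X ⟶ Y) (r : Y ⟶ X), i ≫ r = 𝟙 X → Y ∈ T → X ∈ T)
    (htensor : ∀ (Y Z : D), Y ∈ T → Dualizable Z → Y ⊗ Z ∈ T)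
    {t t' : D} [ExactPairing t t'] (ht : t ∈ T) : t' ∈ T := by
  have hd := dualizable_of_exactPairing t t'
  -- The zig-zag identity exhibits `t'` as a retract of `t' ⊗ (t ⊗ t') ≅ (t ⊗ t') ⊗ t'`.
  exact hretract ((ρ_ t').inv ≫ t' ◁ η_ t t' ≫ (β_ t' (t ⊗ t')).hom)
    ((β_ t' (t ⊗ t')).inv ≫ (α_ t' t t').inv ≫ ε_ t t' ▷ t' ≫ (λ_ t').hom) (by simp)
    (htensor _ _ (htensor _ _ ht hd) hd)

end Braided

section ZeroMorphisms

variable {D : Type*} [Category D] [HasZeroMorphisms D]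

lemma forall_eq_zero_of_retract {A B X : D} (i : A ⟶ B) (r : B ⟶ A) (hir : i ≫ r = 𝟙 A)
    (h : ∀ g : B ⟶ X, g = 0) (f : A ⟶ X) : f = 0 :=
  calc f = i ≫ r ≫ f := by rw [← Category.assoc, hir, Category.id_comp]
    _ = 0 := by rw [h (r ≫ f), comp_zero]

lemma forall_eq_zero_of_iso {A B X : D} (e : A ≅ B) (h : ∀ g : A ⟶ X, g = 0) (f : B ⟶ X) :
    f = 0 :=
  forall_eq_zero_of_retract e.inv e.hom e.inv_hom_id h f

lemma isZero_sigma {J : Type*} {f : J → D} [HasCoproduct f] (h : ∀ j, IsZero (f j)) :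
    IsZero (∐ f) :=
  (IsZero.iff_id_eq_zero _).2 (Sigma.hom_ext _ _ fun j => (h j).eq_of_src _ _)

variable [MonoidalCategory D]

lemma forall_eq_zero_iff_of_exactPairing {Y Y' A Z : D} [ExactPairing Y Y'] :
    (∀ f : Y' ⊗ A ⟶ Z, f = 0) ↔ ∀ g : A ⟶ Y ⊗ Z, g = 0 := by
  let e := tensorLeftHomEquiv A Y Y' Z
  exact ⟨fun h g => e.symm.injective ((h _).trans (h _).symm),
    fun h f => e.injective ((h _).trans (h _).symm)⟩

/-- The largest tensor ideal contained in the left orthogonal of `X`. -/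
def tensorLeftPerp (X : D) : Set D := {s | ∀ (Y : D) (f : Y ⊗ s ⟶ X), f = 0}

lemma forall_eq_zero_of_mem_tensorLeftPerp {s X : D} (hs : s ∈ tensorLeftPerp X) (f : s ⟶ X) :
    f = 0 :=
  forall_eq_zero_of_iso (λ_ s) (hs (𝟙_ D)) f

variable [BraidedCategory D]

lemma mem_tensorLeftPerp_of_isZero_tensor {t t' X : D} [ExactPairing t t']
    (h : IsZero (t ⊗ X)) : t' ∈ tensorLeftPerp X := fun Y =>
  forall_eq_zero_of_iso (β_ t' Y) (forall_eq_zero_iff_of_exactPairing.2 fun _ => h.eq_of_tgt _ _)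

end ZeroMorphisms

section LocTensorIdeal

omit [SymmetricCategory C]

lemma subset_locTensorIdeal (E : Set C) : E ⊆ locTensorIdeal E :=
  fun _ ht => Set.mem_sInter.2 fun _ hS => hS.2 ht

lemma locTensorIdeal_subset {E S : Set C} (hS : IsLocalisingTensorIdeal S) (hE : E ⊆ S) :
    locTensorIdeal E ⊆ S :=
  fun _ hx => Set.mem_sInter.1 hx S ⟨hS, hE⟩

lemma isLocalisingTensorIdeal_locTensorIdeal (E : Set C) :
    IsLocalisingTensorIdeal (locTensorIdeal E) where
  iso_closed e hX := Set.mem_sInter.2 fun S hS =>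
    hS.1.iso_closed e (Set.mem_sInter.1 hX S hS)
  retract_closed i r hir hY := Set.mem_sInter.2 fun S hS =>
    hS.1.retract_closed i r hir (Set.mem_sInter.1 hY S hS)
  shift_closed n _ hX := Set.mem_sInter.2 fun S hS =>
    hS.1.shift_closed n (Set.mem_sInter.1 hX S hS)
  cone_closed Tr hTr h₁ h₂ := Set.mem_sInter.2 fun S hS =>
    hS.1.cone_closed Tr hTr (Set.mem_sInter.1 h₁ S hS) (Set.mem_sInter.1 h₂ S hS)
  coproduct_closed f hf := Set.mem_sInter.2 fun S hS =>
    hS.1.coproduct_closed f fun j => Set.mem_sInter.1 (hf j) S hS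
  tensor_closed Y _ hX := Set.mem_sInter.2 fun S hS =>
    hS.1.tensor_closed Y (Set.mem_sInter.1 hX S hS)

end LocTensorIdeal

lemma isZero_tensor_of_mem_rightPerp {S : Set C} (hS : IsLocalisingTensorIdeal S) {t X : C}
    (ht : t ∈ S) (hdual : Dualizable t) (hX : X ∈ rightPerp S) : IsZero (t ⊗ X) := by
  obtain ⟨t', ⟨_⟩⟩ := hdual
  have hmem : t' ⊗ (t ⊗ X) ∈ S :=
    hS.tensor_closed t' (hS.iso_closed (β_ X t) (hS.tensor_closed X ht))
  exact (IsZero.iff_id_eq_zero _).2 (forall_eq_zero_iff_of_exactPairing.1 (hX hmem) _)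

section TensorLeftExact

variable [∀ X : C, (tensorLeft X).CommShift ℤ]

def shiftTensorIso (Y s : C) (n : ℤ) : (Y ⊗ s)⟦n⟧ ≅ Y⟦n⟧ ⊗ s :=
  (shiftFunctor C n).mapIso (β_ Y s) ≪≫ (((tensorLeft s).commShiftIso n).app Y).symm ≪≫
    β_ s (Y⟦n⟧)

variable [∀ X : C, (tensorLeft X).IsTriangulated]
  [∀ (X : C) (J : Type v), PreservesColimitsOfShape (Discrete J) (tensorLeft X)]

lemma isLocalisingTensorIdeal_tensorLeftPerp (X : C) :
    IsLocalisingTensorIdeal (tensorLeftPerp X) where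
  iso_closed e hs Y := forall_eq_zero_of_iso (whiskerLeftIso Y e) (hs Y)
  retract_closed i r hir hs Y :=
    forall_eq_zero_of_retract (Y ◁ i) (Y ◁ r) (by rw [← whiskerLeft_comp, hir, whiskerLeft_id])
      (hs Y)
  shift_closed n s hs Y := forall_eq_zero_of_iso
    ((shiftTensorIso Y s n).symm ≪≫ (((tensorLeft Y).commShiftIso n).app s).symm) (hs _)
  cone_closed Tr hTr h₁ h₂ Y f := by
    obtain ⟨g, rfl⟩ := Triangle.yoneda_exact₃ _ ((tensorLeft Y).map_distinguished Tr hTr) f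
      (h₂ Y _)
    exact (congrArg _ (forall_eq_zero_of_iso (shiftTensorIso Y Tr.obj₁ 1).symm (h₁ _) g)).trans
      comp_zero
  coproduct_closed g hg Y := forall_eq_zero_of_iso (PreservesCoproduct.iso (tensorLeft Y) g).symm
    fun _ => Sigma.hom_ext _ _ fun j => by rw [comp_zero]; exact hg j Y _
  tensor_closed Z s hs Y := forall_eq_zero_of_iso (α_ Y Z s) (hs (Y ⊗ Z))

lemma isLocalisingTensorIdeal_setOf_isZero_tensor (T : Set C) :
    IsLocalisingTensorIdeal {X : C | ∀ t ∈ T, IsZero (t ⊗ X)} where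
  iso_closed e hX t ht := (hX t ht).of_iso (whiskerLeftIso t e.symm)
  retract_closed i r hir hY t ht := by
    have : IsSplitMono (t ◁ i) :=
      IsSplitMono.mk' ⟨t ◁ r, by rw [← whiskerLeft_comp, hir, whiskerLeft_id]⟩
    exact IsZero.of_mono (t ◁ i) (hY t ht)
  shift_closed n X hX t ht :=
    ((shiftFunctor C n).map_isZero (hX t ht)).of_iso (((tensorLeft t).commShiftIso n).app X)
  cone_closed Tr hTr h₁ h₂ t ht :=
    Triangle.isZero₃_of_isZero₁₂ _ ((tensorLeft t).map_distinguished Tr hTr) (h₁ t ht) (h₂ t ht)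
  coproduct_closed f hf t ht :=
    (isZero_sigma fun j => hf j t ht).of_iso (PreservesCoproduct.iso (tensorLeft t) f)
  tensor_closed Y X hX t ht := ((tensorLeft Y).map_isZero (hX t ht)).of_iso
    ((α_ t Y X).symm ≪≫ whiskerRightIso (β_ t Y) X ≪≫ α_ Y t X)

end TensorLeftExact

variable (C)

/-- Let `T` be a class of dualizable objects of a tensor-triangulated category with
coproducts, closed under retracts and under tensoring with dualizable objects.  Then
`Loc_⊗(T)^⊥ = { X | t ⊗ X ≅ 0 for all t ∈ T }`; in particular `Loc_⊗(T)^⊥` is a localising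
tensor ideal, i.e. the localising tensor ideal generated by `T` is smashing. -/
theorem rightPerp_locTensorIdeal_eq_of_dualizable
    [∀ X : C, (tensorLeft X).CommShift ℤ] [∀ X : C, (tensorLeft X).IsTriangulated]
    [∀ (X : C) (J : Type v), PreservesColimitsOfShape (Discrete J) (tensorLeft X)]
    (T : Set C) (hdual : ∀ t ∈ T, Dualizable t)
    (hretract : ∀ {X Y : C} (i : X ⟶ Y) (r : Y ⟶ X), i ≫ r = 𝟙 X → Y ∈ T → X ∈ T)
    (htensor : ∀ (Y Z : C), Y ∈ T → Dualizable Z → Y ⊗ Z ∈ T) :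
    rightPerp (locTensorIdeal T) = {X : C | ∀ t ∈ T, IsZero (t ⊗ X)} ∧
      IsLocalisingTensorIdeal (rightPerp (locTensorIdeal T)) := by
  have hperp : rightPerp (locTensorIdeal T) = {X : C | ∀ t ∈ T, IsZero (t ⊗ X)} := by
    ext X
    refine ⟨fun hX t ht => isZero_tensor_of_mem_rightPerp
      (isLocalisingTensorIdeal_locTensorIdeal T) (subset_locTensorIdeal T ht) (hdual t ht) hX,
      fun hX s hs => forall_eq_zero_of_mem_tensorLeftPerp ?_⟩
    refine locTensorIdeal_subset (isLocalisingTensorIdeal_tensorLeftPerp X) (fun t ht => ?_) hs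
    obtain ⟨t', ⟨_⟩⟩ := hdual t ht
    have := BraidedCategory.exactPairing_swap t t'
    exact mem_tensorLeftPerp_of_isZero_tensor (hX t' (mem_of_exactPairing hretract htensor ht))
  exact ⟨hperp, hperp ▸ isLocalisingTensorIdeal_setOf_isZero_tensor T⟩
end
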